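/- arXiv:math/0110108 — 3 statements merged into one kernel-verified Lean document; each statement's English description precedes it below -/
import Mathlib

section
/- Let f : ℝ^n → ℝ^n be convex, monotone, and additively homogeneous, with a fixed point v, and let F ⊆ {1,…,n}. The following are equivalent: (1) F is a union of elements of 𝒞^c(f) = 𝒞^f(∂f(v)); (2) there exists a stochastic row vector m whose support is exactly F (m_i > 0 iff i ∈ F) such that m·f(x) ≥ m·x for all x ∈ ℝ^n; (3) there exists a stochastic row vector m whose support is exactly F such that m·f'_v(x) ≥ m·x for all x ∈ ℝ^n, where f'_v(x) = lim_{ε→0+} (f(v + εx) − f(v))/ε is the one-sided directional derivative of f at v. -/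
open Matrix Filter

/-- `f` is additively homogeneous: `f (c·1 + x) = c·1 + f x`. -/
def AddHomog {n : ℕ} (f : (Fin n → ℝ) → (Fin n → ℝ)) : Prop :=
  ∀ (c : ℝ) (x : Fin n → ℝ), f (fun i => c + x i) = fun i => c + f x i

/-- A map between coordinate spaces is convex if each coordinate function is convex. -/
def IsConvexMap {n m : ℕ} (f : (Fin n → ℝ) → (Fin m → ℝ)) : Prop :=
  ∀ i, ConvexOn ℝ Set.univ (fun x => f x i)

/-- Subdifferential of a convex map `f : ℝ^n → ℝ^m` at `v`: matrices `P` with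
`f x - f v ≥ P (x - v)` componentwise. -/
def Subdiff {n m : ℕ} (f : (Fin n → ℝ) → (Fin m → ℝ)) (v : Fin n → ℝ) :
    Set (Matrix (Fin m) (Fin n) ℝ) :=
  {P | ∀ x i, P.mulVec (x - v) i ≤ f x i - f v i}

/-- `p` is a stochastic vector. -/
def IsStochVec {n : ℕ} (p : Fin n → ℝ) : Prop := (∀ i, 0 ≤ p i) ∧ ∑ i, p i = 1

/-- `P` is a row-stochastic matrix. -/
def IsStochMat {n : ℕ} (P : Matrix (Fin n) (Fin n) ℝ) : Prop := ∀ i, IsStochVec (P i)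

/-- `i` has access to `j` in the graph of the nonnegative matrix `P`
(arcs `i → j` when `P i j ≠ 0`). -/
def MatAccess {n : ℕ} (P : Matrix (Fin n) (Fin n) ℝ) : Fin n → Fin n → Prop :=
  Relation.ReflTransGen (fun i j => P i j ≠ 0)

/-- `C` is a class of `P`: an equivalence class of mutual access. -/
def IsClass {n : ℕ} (P : Matrix (Fin n) (Fin n) ℝ) (C : Set (Fin n)) : Prop :=
  ∃ i, C = {j | MatAccess P i j ∧ MatAccess P j i}

/-- `C` is a final class of `P`: a class with no access out of itself. -/
def IsFinalClass {n : ℕ} (P : Matrix (Fin n) (Fin n) ℝ) (C : Set (Fin n)) : Prop :=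
  IsClass P C ∧ ∀ i ∈ C, ∀ j, MatAccess P i j → j ∈ C

/-- `N^f(P)`: the union of the final classes of `P`. -/
def finalNodes {n : ℕ} (P : Matrix (Fin n) (Fin n) ℝ) : Set (Fin n) :=
  {i | ∃ C, IsFinalClass P C ∧ i ∈ C}

/-- Final graph `G^f(P)`: union of graphs of `P_{FF}` over final classes `F`. -/
def finalGraph {n : ℕ} (P : Matrix (Fin n) (Fin n) ℝ) : Fin n → Fin n → Prop :=
  fun i j => ∃ C, IsFinalClass P C ∧ i ∈ C ∧ j ∈ C ∧ P i j ≠ 0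

/-- `N^f(PP)` for a set of matrices. -/
def finalNodesSet {n : ℕ} (PP : Set (Matrix (Fin n) (Fin n) ℝ)) : Set (Fin n) :=
  {i | ∃ P ∈ PP, i ∈ finalNodes P}

/-- `𝒞^f(PP)`: final classes of matrices in `PP`. -/
def finalClassesSet {n : ℕ} (PP : Set (Matrix (Fin n) (Fin n) ℝ)) : Set (Set (Fin n)) :=
  {C | ∃ P ∈ PP, IsFinalClass P C}

/-- `𝒢^f(PP)`: union of final graphs of matrices in `PP`. -/
def finalGraphSet {n : ℕ} (PP : Set (Matrix (Fin n) (Fin n) ℝ)) : Fin n → Fin n → Prop :=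
  fun i j => ∃ P ∈ PP, finalGraph P i j

/-- Access in a directed graph given as a relation. -/
def GAccess {n : ℕ} (G : Fin n → Fin n → Prop) : Fin n → Fin n → Prop :=
  Relation.ReflTransGen G

/-- `C` is a (nontrivial) class of the graph `G`: an equivalence class of mutual
access containing at least one arc (i.e. the node set of a strongly connected component
of the graph `G`). -/
def IsGraphClass {n : ℕ} (G : Fin n → Fin n → Prop) (C : Set (Fin n)) : Prop :=
  (∃ i, C = {j | GAccess G i j ∧ GAccess G j i}) ∧ ∃ i ∈ C, ∃ j ∈ C, G i j

/-- `G^k`: arcs are directed paths of length `k` in `G`. -/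
def GraphPow {n : ℕ} (G : Fin n → Fin n → Prop) (k : ℕ) : Fin n → Fin n → Prop :=
  fun i j => ∃ c : ℕ → Fin n, c 0 = i ∧ c k = j ∧ ∀ t < k, G (c t) (c (t + 1))

/-- There is a circuit of length `ℓ ≥ 1` of `G` with all nodes in `C`. -/
def HasCircuitIn {n : ℕ} (G : Fin n → Fin n → Prop) (C : Set (Fin n)) (ℓ : ℕ) : Prop :=
  0 < ℓ ∧ ∃ c : ℕ → Fin n, c 0 = c ℓ ∧ (∀ t ≤ ℓ, c t ∈ C) ∧ ∀ t < ℓ, G (c t) (c (t + 1))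

/-- gcd of a set of natural numbers. -/
noncomputable def SetGcd (S : Set ℕ) : ℕ :=
  sInf {d | (∀ s ∈ S, d ∣ s) ∧ ∀ e, (∀ s ∈ S, e ∣ s) → e ∣ d}

/-- lcm of a set of natural numbers. -/
noncomputable def SetLcm (S : Set ℕ) : ℕ :=
  sInf {m | (∀ s ∈ S, s ∣ m) ∧ ∀ e, (∀ s ∈ S, s ∣ e) → m ∣ e}

/-- Cyclicity of a graph: lcm over the strongly connected components of the
gcd of the lengths of their circuits. -/
noncomputable def GraphCyclicity {n : ℕ} (G : Fin n → Fin n → Prop) : ℕ :=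
  SetLcm {d | ∃ C, IsGraphClass G C ∧ d = SetGcd {ℓ | HasCircuitIn G C ℓ}}

/-- The (additive) eigenspace of `f` for eigenvalue `lam`. -/
def Eigenspace {n : ℕ} (f : (Fin n → ℝ) → (Fin n → ℝ)) (lam : ℝ) : Set (Fin n → ℝ) :=
  {x | f x = fun i => lam + x i}

/-- Restriction of a vector to the coordinates in `C`. -/
def restrictTo {n : ℕ} (C : Set (Fin n)) (x : Fin n → ℝ) : C → ℝ := fun i => x i

/-!
Every `P ∈ ∂f(v)` is row-stochastic, and a final class `C` of `P` carries an invariant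
probability `m = m P` supported exactly on `C`; then `m·f(x) - m·v ≥ m P (x - v) = m·(x - v)`.
Averaging such measures handles unions of final classes. Conversely, if `m·f ≥ m·id` then also
`m·f'_v ≥ m·id`, and each coordinate of the sublinear map `f'_v` is attained by a row of `∂f(v)`
(Hahn–Banach). Separating `m` from the compact convex set `{m P | P ∈ ∂f(v)}` therefore gives
`P ∈ ∂f(v)` with `m P = m`, and the support of an invariant probability of a stochastic matrix
is a union of its final classes. Finally `m·f ≥ m·id` and `m·f'_v ≥ m·id` are equivalent because
`f'_v(x) ≤ f(v + x) - f(v)` and `f'_v` is the limit of the difference quotients.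
-/

open Set Topology

section RightLineDeriv

variable {E : Type*} [AddCommGroup E] [Module ℝ E] {g : E → ℝ}

noncomputable def rightSlope (g : E → ℝ) (v x : E) (ε : ℝ) : ℝ :=
  (g (v + ε • x) - g v) / ε

-- The infimum of the difference quotients; for convex `g` it is their limit as `ε → 0⁺`
-- (`ConvexOn.tendsto_rightSlope`).
noncomputable def rightLineDeriv (g : E → ℝ) (v x : E) : ℝ :=
  sInf (rightSlope g v x '' Ioi 0)

noncomputable def rightLineDerivPi {ι : Type*} (f : E → ι → ℝ) (v x : E) : ι → ℝ :=
  fun i => rightLineDeriv (f · i) v x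

lemma rightLineDeriv_zero (v : E) : rightLineDeriv g v 0 = 0 := by
  have : rightSlope g v 0 = fun _ => 0 := by
    ext ε
    simp [rightSlope]
  rw [rightLineDeriv, this, (nonempty_Ioi (a := (0 : ℝ))).image_const, csInf_singleton]

lemma tendsto_const_mul_nhdsGT_zero {c : ℝ} (hc : 0 < c) :
    Tendsto (c * ·) (𝓝[>] 0) (𝓝[>] 0) :=
  tendsto_nhdsWithin_iff.2
    ⟨((continuous_const_mul c).tendsto' 0 0 (mul_zero c)).mono_left nhdsWithin_le_nhds,
      eventually_mem_nhdsWithin.mono fun _ hε => mul_pos hc hε⟩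

namespace ConvexOn

lemma comp_add_smul (hg : ConvexOn ℝ univ g) (v x : E) :
    ConvexOn ℝ univ (fun t : ℝ => g (v + t • x)) := by
  have h : (fun t : ℝ => g (v + t • x)) = g ∘ AffineMap.lineMap v (v + x) := by
    ext t
    simp [AffineMap.lineMap_apply, add_comm]
  rw [h]
  simpa using hg.comp_affineMap (AffineMap.lineMap v (v + x))

lemma monotoneOn_rightSlope (hg : ConvexOn ℝ univ g) (v x : E) :
    MonotoneOn (rightSlope g v x) {0}ᶜ := by
  have h := (hg.comp_add_smul v x).slope_mono (mem_univ 0)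
  rw [← compl_eq_univ_sdiff] at h
  have hslope : rightSlope g v x = slope (fun t : ℝ => g (v + t • x)) 0 := by
    ext ε
    simp [rightSlope, slope_def_field]
  rwa [hslope]

lemma sub_le_rightSlope (hg : ConvexOn ℝ univ g) (v x : E) {ε : ℝ} (hε : 0 < ε) :
    g v - g (v - x) ≤ rightSlope g v x ε := by
  have h := hg.monotoneOn_rightSlope v x (by norm_num : (-1 : ℝ) ≠ 0) hε.ne' (by linarith)
  have hneg : rightSlope g v x (-1) = g v - g (v - x) := by
    simp only [rightSlope, neg_one_smul, ← sub_eq_add_neg]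
    ring
  rwa [hneg] at h

lemma bddBelow_rightSlope (hg : ConvexOn ℝ univ g) (v x : E) :
    BddBelow (rightSlope g v x '' Ioi 0) :=
  ⟨g v - g (v - x), forall_mem_image.2 fun _ hε => hg.sub_le_rightSlope v x hε⟩

lemma tendsto_rightSlope (hg : ConvexOn ℝ univ g) (v x : E) :
    Tendsto (rightSlope g v x) (𝓝[>] 0) (𝓝 (rightLineDeriv g v x)) :=
  ((hg.monotoneOn_rightSlope v x).mono fun _ hε => ne_of_gt hε).tendsto_nhdsGT
    (hg.bddBelow_rightSlope v x)

lemma rightLineDeriv_le_rightSlope (hg : ConvexOn ℝ univ g) (v x : E) {ε : ℝ} (hε : 0 < ε) :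
    rightLineDeriv g v x ≤ rightSlope g v x ε :=
  csInf_le (hg.bddBelow_rightSlope v x) (mem_image_of_mem _ hε)

lemma rightLineDeriv_le_sub (hg : ConvexOn ℝ univ g) (v x : E) :
    rightLineDeriv g v x ≤ g (v + x) - g v := by
  simpa [rightSlope] using hg.rightLineDeriv_le_rightSlope v x one_pos

lemma rightLineDeriv_smul (hg : ConvexOn ℝ univ g) (v x : E) {c : ℝ} (hc : 0 < c) :
    rightLineDeriv g v (c • x) = c * rightLineDeriv g v x := by
  have hslope : ∀ ε, rightSlope g v (c • x) ε = c * rightSlope g v x (c * ε) := by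
    intro ε
    rcases eq_or_ne ε 0 with rfl | hε
    · simp [rightSlope]
    · simp only [rightSlope, smul_smul, mul_comm ε c]
      field_simp
  refine tendsto_nhds_unique (hg.tendsto_rightSlope v (c • x)) ?_
  rw [funext hslope]
  exact ((hg.tendsto_rightSlope v x).comp (tendsto_const_mul_nhdsGT_zero hc)).const_mul c

lemma rightSlope_add_le (hg : ConvexOn ℝ univ g) (v x y : E) {ε : ℝ} (hε : 0 < ε) :
    rightSlope g v (x + y) ε ≤ rightSlope g v x (2 * ε) + rightSlope g v y (2 * ε) := by
  have hmid : (1 / 2 : ℝ) • (v + (2 * ε) • x) + (1 / 2 : ℝ) • (v + (2 * ε) • y) =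
      v + ε • (x + y) := by
    module
  have h := hg.2 (mem_univ (v + (2 * ε) • x)) (mem_univ (v + (2 * ε) • y))
    (by norm_num : (0 : ℝ) ≤ 1 / 2) (by norm_num : (0 : ℝ) ≤ 1 / 2) (by norm_num)
  rw [hmid, smul_eq_mul, smul_eq_mul] at h
  simp only [rightSlope]
  rw [← add_div, div_le_div_iff₀ hε (by positivity)]
  nlinarith

lemma rightLineDeriv_add_le (hg : ConvexOn ℝ univ g) (v x y : E) :
    rightLineDeriv g v (x + y) ≤ rightLineDeriv g v x + rightLineDeriv g v y := by
  have hlim (z : E) := (hg.tendsto_rightSlope v z).comp (tendsto_const_mul_nhdsGT_zero two_pos)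
  refine le_of_tendsto_of_tendsto (hg.tendsto_rightSlope v (x + y)) ((hlim x).add (hlim y)) ?_
  filter_upwards [self_mem_nhdsWithin] with ε hε
  exact hg.rightSlope_add_le v x y hε

lemma mul_rightLineDeriv_le (hg : ConvexOn ℝ univ g) (v x : E) (t : ℝ) :
    t * rightLineDeriv g v x ≤ rightLineDeriv g v (t • x) := by
  rcases lt_trichotomy t 0 with ht | rfl | ht
  · have hsum := hg.rightLineDeriv_add_le v x (-x)
    rw [add_neg_cancel, rightLineDeriv_zero] at hsum
    rw [show t • x = (-t) • -x by simp, hg.rightLineDeriv_smul v (-x) (neg_pos.2 ht)]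
    nlinarith
  · simp [rightLineDeriv_zero]
  · exact (hg.rightLineDeriv_smul v x ht).ge

theorem exists_linearMap_le_rightLineDeriv (hg : ConvexOn ℝ univ g) (v x : E) :
    ∃ ℓ : E →ₗ[ℝ] ℝ, (∀ y, ℓ y ≤ rightLineDeriv g v y) ∧ ℓ x = rightLineDeriv g v x := by
  have hzero : ∀ c : ℝ, c • x = 0 → c • rightLineDeriv g v x = 0 := by
    intro c hcx
    rcases smul_eq_zero.1 hcx with rfl | rfl
    · exact zero_smul _ _
    · rw [rightLineDeriv_zero, smul_zero]
  set ℓ₀ := LinearPMap.mkSpanSingleton' (σ := RingHom.id ℝ) x (rightLineDeriv g v x) hzero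
  have hℓ₀_le : ∀ z : ℓ₀.domain, ℓ₀ z ≤ rightLineDeriv g v z := by
    rintro ⟨z, hz⟩
    obtain ⟨c, rfl⟩ := Submodule.mem_span_singleton.1 hz
    rw [LinearPMap.mkSpanSingleton'_apply, RingHom.id_apply, smul_eq_mul]
    exact hg.mul_rightLineDeriv_le v x c
  obtain ⟨ℓ, hℓ₀, hℓ⟩ := exists_extension_of_le_sublinear ℓ₀ (rightLineDeriv g v)
    (fun c hc y => hg.rightLineDeriv_smul v y hc) (hg.rightLineDeriv_add_le v) hℓ₀_le
  exact ⟨ℓ, hℓ, (hℓ₀ ⟨x, Submodule.mem_span_singleton_self x⟩).trans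
    (LinearPMap.mkSpanSingleton'_apply_self _ _ _ _)⟩

end ConvexOn

end RightLineDeriv

section StochasticMatrix

variable {n : ℕ} {P : Matrix (Fin n) (Fin n) ℝ} {m : Fin n → ℝ}

lemma IsStochVec.mem_Icc {p : Fin n → ℝ} (hp : IsStochVec p) (i : Fin n) : p i ∈ Icc 0 1 :=
  ⟨hp.1 i, hp.2 ▸ Finset.single_le_sum (fun j _ => hp.1 j) (Finset.mem_univ i)⟩

lemma IsStochVec.exists_pos {p : Fin n → ℝ} (hp : IsStochVec p) : ∃ i, 0 < p i := by
  by_contra! h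
  linarith [Finset.sum_nonpos fun i (_ : i ∈ Finset.univ) => h i, hp.2]

lemma isStochVec_inv_sum_smul {w : Fin n → ℝ} (hw0 : 0 ≤ w) (hw : w ≠ 0) :
    IsStochVec ((∑ i, w i)⁻¹ • w) := by
  obtain ⟨i, hi⟩ := Function.ne_iff.1 hw
  have hpos : 0 < ∑ i, w i :=
    (lt_of_le_of_ne (hw0 i) (Ne.symm hi)).trans_le
      (Finset.single_le_sum (fun j _ => hw0 j) (Finset.mem_univ i))
  refine ⟨fun j => mul_nonneg (inv_nonneg.2 hpos.le) (hw0 j), ?_⟩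
  simp only [Pi.smul_apply, smul_eq_mul, ← Finset.mul_sum]
  exact inv_mul_cancel₀ hpos.ne'

lemma IsStochMat.mulVec_one (hP : IsStochMat P) : P *ᵥ 1 = 1 :=
  funext fun i => (dotProduct_one (P i)).trans (hP i).2

lemma IsStochMat.sum_vecMul (hP : IsStochMat P) (w : Fin n → ℝ) :
    ∑ j, (w ᵥ* P) j = ∑ i, w i := by
  rw [← dotProduct_one, ← dotProduct_mulVec, hP.mulVec_one, dotProduct_one]

lemma IsStochMat.exists_stochVec_vecMul_eq [NeZero n] (hP : IsStochMat P) :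
    ∃ m, IsStochVec m ∧ m ᵥ* P = m := by
  have hdet : (P - 1).det = 0 := exists_mulVec_eq_zero_iff.1
    ⟨1, one_ne_zero, by rw [sub_mulVec, hP.mulVec_one, one_mulVec, sub_self]⟩
  obtain ⟨u, hu0, hu⟩ := exists_vecMul_eq_zero_iff.2 hdet
  rw [vecMul_sub, vecMul_one, sub_eq_zero] at hu
  -- `|u|` is subinvariant by the triangle inequality, and mass conservation makes it invariant.
  have hsub : ∀ j, |u| j ≤ (|u| ᵥ* P) j := fun j => calc
    |u| j = |∑ i, u i * P i j| := by rw [Pi.abs_apply, ← congrFun hu j]; rfl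
    _ ≤ ∑ i, |u i * P i j| := Finset.abs_sum_le_sum_abs _ _
    _ = (|u| ᵥ* P) j := Finset.sum_congr rfl fun i _ => by
      rw [abs_mul, abs_of_nonneg ((hP i).1 j)]; rfl
  have hinv : |u| ᵥ* P = |u| := funext fun j =>
    ((Finset.sum_eq_sum_iff_of_le fun j _ => hsub j).1 (hP.sum_vecMul |u|).symm j
      (Finset.mem_univ j)).symm
  refine ⟨_, isStochVec_inv_sum_smul (abs_nonneg u) (by simpa using hu0), ?_⟩
  rw [smul_vecMul, hinv]

lemma IsStochMat.exists_stochVec_vecMul_eq_of_forall_mem {C : Set (Fin n)} {i₀ : Fin n}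
    (hP : IsStochMat P) (hi₀ : i₀ ∈ C) (hC : ∀ i ∈ C, ∀ j, P i j ≠ 0 → j ∈ C) :
    ∃ m, IsStochVec m ∧ m ᵥ* P = m ∧ ∀ j ∉ C, m j = 0 := by
  classical
  have : NeZero n := NeZero.of_pos i₀.pos
  -- Redirect the rows outside `C` to `i₀`: the new chain only has invariant measures on `C`.
  set Q : Matrix (Fin n) (Fin n) ℝ :=
    Matrix.of fun i j => if i ∈ C then P i j else (Pi.single i₀ 1 : Fin n → ℝ) j
  have hQ : IsStochMat Q := by
    intro i
    by_cases hi : i ∈ C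
    · convert hP i using 1
      ext j
      simp [Q, hi]
    · refine ⟨fun j => ?_, ?_⟩
      · simp only [Q, of_apply, hi, if_false, Pi.single_apply]
        split_ifs <;> norm_num
      · simp [Q, hi]
  obtain ⟨m, hm, hmQ⟩ := hQ.exists_stochVec_vecMul_eq
  have hout : ∀ j ∉ C, m j = 0 := by
    intro j hj
    rw [← congrFun hmQ j]
    show ∑ i, m i * Q i j = 0
    refine Finset.sum_eq_zero fun i _ => ?_
    by_cases hi : i ∈ C
    · simp [Q, hi, not_not.1 (mt (hC i hi j) hj)]
    · simp [Q, hi, Pi.single_apply, show j ≠ i₀ from fun h => hj (h ▸ hi₀)]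
  refine ⟨m, hm, funext fun j => ?_, hout⟩
  rw [← congrFun hmQ j]
  show ∑ i, m i * P i j = ∑ i, m i * Q i j
  refine Finset.sum_congr rfl fun i _ => ?_
  by_cases hi : i ∈ C
  · simp [Q, hi]
  · simp [hout i hi]

lemma IsStochMat.pos_of_matAccess (hP : IsStochMat P) (hm0 : 0 ≤ m) (hmP : m ᵥ* P = m)
    {i j : Fin n} (hi : 0 < m i) (hij : MatAccess P i j) : 0 < m j := by
  induction hij with
  | refl => exact hi
  | @tail b c _ hbc ih =>
    calc 0 < m b * P b c := mul_pos ih (((hP b).1 c).lt_of_ne' hbc)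
      _ ≤ (m ᵥ* P) c := Finset.single_le_sum (f := fun k => m k * P k c)
          (fun k _ => mul_nonneg (hm0 k) ((hP k).1 c)) (Finset.mem_univ b)
      _ = m c := by rw [hmP]

lemma IsStochMat.exists_stochVec_support_eq_of_isFinalClass {C : Set (Fin n)}
    (hP : IsStochMat P) (hC : IsFinalClass P C) :
    ∃ m, IsStochVec m ∧ (∀ i, 0 < m i ↔ i ∈ C) ∧ m ᵥ* P = m := by
  obtain ⟨⟨i₀, rfl⟩, hfinal⟩ := hC
  obtain ⟨m, hm, hmP, hout⟩ := hP.exists_stochVec_vecMul_eq_of_forall_mem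
    (show i₀ ∈ {j | MatAccess P i₀ j ∧ MatAccess P j i₀} from ⟨.refl, .refl⟩)
    fun i hi j hij => hfinal i hi j (.single hij)
  obtain ⟨t, ht⟩ := hm.exists_pos
  have htC : t ∈ {j | MatAccess P i₀ j ∧ MatAccess P j i₀} := by
    by_contra h
    exact ht.ne' (hout t h)
  refine ⟨m, hm, fun j => ⟨fun hj => ?_, fun hj => ?_⟩, hmP⟩
  · by_contra h
    exact hj.ne' (hout j h)
  · exact hP.pos_of_matAccess hm.1 hmP ht (htC.2.trans hj.1)

lemma IsStochMat.mem_of_ne_zero_of_mem (hP : IsStochMat P) (hm0 : 0 ≤ m) (hmP : m ᵥ* P = m)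
    {B : Finset (Fin n)} (hBpos : ∀ b ∈ B, 0 < m b)
    (hBpred : ∀ a b, 0 < m a → b ∈ B → P a b ≠ 0 → a ∈ B)
    {a b : Fin n} (ha : a ∈ B) (hab : P a b ≠ 0) : b ∈ B := by
  -- Mass balance: `m(B) = ∑_{a ∈ B} m_a P_a(B) ≤ m(B)` forces `P_a(B) = 1` for `a ∈ B`.
  have hmass : ∑ b ∈ B, m b = ∑ a ∈ B, m a * ∑ b ∈ B, P a b := by
    calc ∑ b ∈ B, m b = ∑ b ∈ B, ∑ a, m a * P a b :=
          Finset.sum_congr rfl fun b _ => by rw [← congrFun hmP b]; rfl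
      _ = ∑ a, m a * ∑ b ∈ B, P a b := by
          rw [Finset.sum_comm]
          simp only [Finset.mul_sum]
      _ = ∑ a ∈ B, m a * ∑ b ∈ B, P a b := by
          refine (Finset.sum_subset (Finset.subset_univ B) fun a _ ha => ?_).symm
          rcases (show (0 : ℝ) ≤ m a from hm0 a).eq_or_lt with h | h
          · rw [← h, zero_mul]
          · rw [Finset.sum_eq_zero fun b hb => not_not.1 fun hab => ha (hBpred a b h hb hab),
              mul_zero]
  have hle : ∀ a ∈ B, m a * ∑ b ∈ B, P a b ≤ m a := fun a _ =>
    mul_le_of_le_one_right (hm0 a) ((Finset.sum_le_sum_of_subset_of_nonneg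
      (Finset.subset_univ B) fun b _ _ => (hP a).1 b).trans (hP a).2.le)
  have hrow := (Finset.sum_eq_sum_iff_of_le hle).1 hmass.symm a ha
  by_contra hb
  have hlt : ∑ c ∈ B, P a c < 1 := by
    have h := Finset.sum_le_sum_of_subset_of_nonneg (Finset.subset_univ (insert b B))
      fun c _ _ => (hP a).1 c
    rw [Finset.sum_insert hb, (hP a).2] at h
    linarith [((hP a).1 b).lt_of_ne' hab]
  nlinarith [hBpos a ha]

lemma IsStochMat.matAccess_symm_of_pos (hP : IsStochMat P) (hm0 : 0 ≤ m) (hmP : m ᵥ* P = m)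
    {i j : Fin n} (hi : 0 < m i) (hij : MatAccess P i j) : MatAccess P j i := by
  classical
  set B := Finset.univ.filter fun k => 0 < m k ∧ MatAccess P k i
  have hmem : ∀ k, k ∈ B ↔ 0 < m k ∧ MatAccess P k i := by simp [B]
  suffices j ∈ B from ((hmem j).1 this).2
  induction hij with
  | refl => exact (hmem i).2 ⟨hi, .refl⟩
  | tail _ hbc ih =>
    exact hP.mem_of_ne_zero_of_mem hm0 hmP (fun b hb => ((hmem b).1 hb).1)
      (fun a b ha hb hab => (hmem a).2 ⟨ha, .head hab ((hmem b).1 hb).2⟩) ih hbc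

lemma IsStochMat.eq_sUnion_isFinalClass (hP : IsStochMat P) (hm0 : 0 ≤ m) (hmP : m ᵥ* P = m)
    {F : Set (Fin n)} (hF : ∀ i, 0 < m i ↔ i ∈ F) :
    F = ⋃₀ {C | IsFinalClass P C ∧ C ⊆ F} := by
  refine subset_antisymm (fun i hi => ?_) (sUnion_subset fun C hC => hC.2)
  have hmi := (hF i).2 hi
  refine ⟨{j | MatAccess P i j ∧ MatAccess P j i}, ⟨⟨⟨i, rfl⟩, ?_⟩, ?_⟩, .refl, .refl⟩
  · rintro a ⟨hia, -⟩ b hab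
    exact ⟨hia.trans hab, hP.matAccess_symm_of_pos hm0 hmP hmi (hia.trans hab)⟩
  · rintro a ⟨hia, -⟩
    exact (hF a).1 (hP.pos_of_matAccess hm0 hmP hmi hia)

end StochasticMatrix

section Subdifferential

variable {n : ℕ} {f : (Fin n → ℝ) → (Fin n → ℝ)} {v : Fin n → ℝ}

lemma exists_mem_subdiff_mulVec_eq (hconv : IsConvexMap f) (x : Fin n → ℝ) :
    ∃ P ∈ Subdiff f v, P *ᵥ x = rightLineDerivPi f v x := by
  have hrow : ∀ i, ∃ q : Fin n → ℝ, (∀ y, q ⬝ᵥ y ≤ rightLineDeriv (f · i) v y) ∧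
      q ⬝ᵥ x = rightLineDeriv (f · i) v x := by
    intro i
    obtain ⟨ℓ, hle, heq⟩ := (hconv i).exists_linearMap_le_rightLineDeriv v x
    obtain ⟨q, rfl⟩ := (dotProductEquiv ℝ (Fin n)).surjective ℓ
    exact ⟨q, hle, heq⟩
  choose q hq_le hq_eq using hrow
  refine ⟨Matrix.of q, fun y i => ?_, funext hq_eq⟩
  calc (Matrix.of q *ᵥ (y - v)) i = q i ⬝ᵥ (y - v) := rfl
    _ ≤ rightLineDeriv (f · i) v (y - v) := hq_le i _
    _ ≤ f (v + (y - v)) i - f v i := (hconv i).rightLineDeriv_le_sub v _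
    _ = f y i - f v i := by rw [add_sub_cancel]

lemma isStochMat_of_mem_subdiff (hmon : Monotone f) (hhom : AddHomog f)
    {P : Matrix (Fin n) (Fin n) ℝ} (hP : P ∈ Subdiff f v) : IsStochMat P := by
  intro i
  refine ⟨fun j => ?_, ?_⟩
  · have h := hP (v - Pi.single j 1) i
    have hle : f (v - Pi.single j 1) i ≤ f v i :=
      hmon (sub_le_self v (Pi.single_nonneg.2 zero_le_one)) i
    rw [sub_sub_cancel_left, mulVec_neg, mulVec_single_one] at h
    simp only [Pi.neg_apply, col_apply] at h
    linarith
  · have hconst : ∀ c : ℝ, (∑ j, P i j) * c ≤ c := by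
      intro c
      have h := hP (fun k => c + v k) i
      rw [hhom c v, show (fun k => c + v k) - v = fun _ => c by ext; simp] at h
      simpa [mulVec, dotProduct, Finset.sum_mul] using h
    linarith [hconst 1, hconst (-1)]

lemma convex_subdiff : Convex ℝ (Subdiff f v) := by
  intro P hP Q hQ a b ha hb hab x i
  rw [add_mulVec, smul_mulVec, smul_mulVec]
  calc a * (P *ᵥ (x - v)) i + b * (Q *ᵥ (x - v)) i
      ≤ a * (f x i - f v i) + b * (f x i - f v i) :=
        add_le_add (mul_le_mul_of_nonneg_left (hP x i) ha) (mul_le_mul_of_nonneg_left (hQ x i) hb)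
    _ = f x i - f v i := by rw [← add_mul, hab, one_mul]

lemma isClosed_subdiff : IsClosed (Subdiff f v) := by
  simp only [Subdiff, Set.ofPred_forall]
  exact isClosed_iInter fun x => isClosed_iInter fun i =>
    isClosed_le ((continuous_apply i).comp (continuous_id.matrix_mulVec continuous_const))
      continuous_const

lemma isCompact_subdiff (hmon : Monotone f) (hhom : AddHomog f) : IsCompact (Subdiff f v) := by
  refine (isCompact_univ_pi fun _ => isCompact_univ_pi fun _ =>
    isCompact_Icc (a := (0 : ℝ)) (b := 1)).of_isClosed_subset
    isClosed_subdiff fun P hP => ?_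
  exact fun i _ j _ => (isStochMat_of_mem_subdiff hmon hhom hP i).mem_Icc j

end Subdifferential

section Excessive

variable {n : ℕ} {f : (Fin n → ℝ) → (Fin n → ℝ)} {v m : Fin n → ℝ}

def IsExcessive {ι : Type*} [Fintype ι] (g : (ι → ℝ) → ι → ℝ) (m : ι → ℝ) : Prop :=
  ∀ x, m ⬝ᵥ x ≤ m ⬝ᵥ g x

lemma exists_mem_subdiff_vecMul_eq (hconv : IsConvexMap f) (hmon : Monotone f)
    (hhom : AddHomog f) (hm : IsExcessive (rightLineDerivPi f v) m) :
    ∃ P ∈ Subdiff f v, m ᵥ* P = m := by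
  by_contra! hnot
  have hlin : IsLinearMap ℝ fun P : Matrix (Fin n) (Fin n) ℝ => m ᵥ* P :=
    ⟨fun P Q => vecMul_add P Q m, fun c P => vecMul_smul m c P⟩
  obtain ⟨φ, u, hφ_lt, hφ_m⟩ := geometric_hahn_banach_closed_point
    (convex_subdiff.is_linear_image hlin)
    ((isCompact_subdiff hmon hhom).image (continuous_const.matrix_vecMul continuous_id)).isClosed
    (fun ⟨P, hP, hPm⟩ => hnot P hP hPm)
  obtain ⟨x, hx⟩ := (dotProductEquiv ℝ (Fin n)).surjective φ.toLinearMap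
  have hφ : ∀ y, φ y = x ⬝ᵥ y := fun y => by
    rw [← dotProductEquiv_apply_apply, hx, ContinuousLinearMap.coe_coe]
  obtain ⟨P, hP, hPx⟩ := exists_mem_subdiff_mulVec_eq (v := v) hconv x
  have h := hφ_lt _ ⟨P, hP, rfl⟩
  rw [hφ, dotProduct_comm, ← dotProduct_mulVec, hPx] at h
  rw [hφ, dotProduct_comm] at hφ_m
  linarith [hm x]

lemma isExcessive_rightLineDerivPi_iff (hconv : IsConvexMap f) (hv : f v = v) (hm0 : 0 ≤ m) :
    IsExcessive (rightLineDerivPi f v) m ↔ IsExcessive f m := by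
  refine ⟨fun hm x => ?_, fun hm x => ?_⟩
  · have hle : rightLineDerivPi f v (x - v) ≤ f x - v := fun i => by
      simpa [rightLineDerivPi, hv] using (hconv i).rightLineDeriv_le_sub v (x - v)
    have h := dotProduct_le_dotProduct_of_nonneg_left hle hm0
    have h' := hm (x - v)
    rw [dotProduct_sub] at h h'
    linarith
  · have hlim : Tendsto (fun ε => m ⬝ᵥ fun i => rightSlope (f · i) v x ε) (𝓝[>] 0)
        (𝓝 (m ⬝ᵥ rightLineDerivPi f v x)) :=
      tendsto_finsetSum _ fun i _ => ((hconv i).tendsto_rightSlope v x).const_mul (m i)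
    refine ge_of_tendsto hlim ?_
    filter_upwards [self_mem_nhdsWithin] with ε (hε : 0 < ε)
    have hslope : (fun i => rightSlope (f · i) v x ε) = ε⁻¹ • (f (v + ε • x) - v) := by
      ext i
      simp [rightSlope, hv, div_eq_inv_mul]
    have h := hm (v + ε • x)
    rw [dotProduct_add, dotProduct_smul, smul_eq_mul] at h
    rw [hslope, dotProduct_smul, dotProduct_sub, smul_eq_mul, le_inv_mul_iff₀ hε]
    linarith

lemma isExcessive_of_mem_subdiff_of_vecMul_eq (hv : f v = v) {P : Matrix (Fin n) (Fin n) ℝ}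
    (hP : P ∈ Subdiff f v) (hm0 : 0 ≤ m) (hmP : m ᵥ* P = m) : IsExcessive f m := by
  intro x
  have hle : P *ᵥ (x - v) ≤ f x - v := fun i => by simpa [hv] using hP x i
  have h := dotProduct_le_dotProduct_of_nonneg_left hle hm0
  rw [dotProduct_mulVec, hmP, dotProduct_sub, dotProduct_sub] at h
  linarith

end Excessive

section ExcessiveSupports

variable {n : ℕ} {f : (Fin n → ℝ) → (Fin n → ℝ)} {v : Fin n → ℝ}

def excessiveSupports (g : (Fin n → ℝ) → (Fin n → ℝ)) : Set (Set (Fin n)) :=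
  {F | ∃ m, IsStochVec m ∧ (∀ i, 0 < m i ↔ i ∈ F) ∧ IsExcessive g m}

lemma supClosed_excessiveSupports (g : (Fin n → ℝ) → (Fin n → ℝ)) :
    SupClosed (excessiveSupports g) := by
  rintro F ⟨m, hm, hmF, hmg⟩ G ⟨w, hw, hwG, hwg⟩
  refine ⟨(1 / 2 : ℝ) • (m + w), ⟨fun i => ?_, ?_⟩, fun i => ?_, fun x => ?_⟩
  · have := hm.1 i
    have := hw.1 i
    simp only [Pi.smul_apply, Pi.add_apply, smul_eq_mul]
    positivity
  · simp only [Pi.smul_apply, Pi.add_apply, smul_eq_mul, ← Finset.mul_sum,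
      Finset.sum_add_distrib, hm.2, hw.2]
    norm_num
  · simp only [Pi.smul_apply, Pi.add_apply, smul_eq_mul, sup_eq_union, mem_union, ← hmF, ← hwG]
    have := hm.1 i
    have := hw.1 i
    constructor
    · intro h
      by_contra! h'
      linarith
    · rintro (h | h) <;> positivity
  · simp only [smul_dotProduct, add_dotProduct, smul_eq_mul]
    linarith [hmg x, hwg x]

lemma sUnion_mem_excessiveSupports {g : (Fin n → ℝ) → (Fin n → ℝ)} {S : Set (Set (Fin n))}
    (hS : S ⊆ excessiveSupports g) (hne : (⋃₀ S).Nonempty) : ⋃₀ S ∈ excessiveSupports g := by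
  classical
  have hfin : S.Finite := toFinite S
  obtain ⟨_, C, hC, -⟩ := hne
  have h := (supClosed_excessiveSupports g).finsetSup'_mem (f := id)
    ⟨C, hfin.mem_toFinset.2 hC⟩ fun C hC => hS (hfin.mem_toFinset.1 hC)
  simpa [Finset.sup'_eq_sup, Finset.sup_id_set_eq_sUnion, sUnion_eq_biUnion] using h

lemma finalClassesSet_subdiff_subset (hmon : Monotone f) (hhom : AddHomog f) (hv : f v = v) :
    finalClassesSet (Subdiff f v) ⊆ excessiveSupports f := by
  rintro C ⟨P, hP, hC⟩
  obtain ⟨m, hm, hmC, hmP⟩ :=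
    (isStochMat_of_mem_subdiff hmon hhom hP).exists_stochVec_support_eq_of_isFinalClass hC
  exact ⟨m, hm, hmC, isExcessive_of_mem_subdiff_of_vecMul_eq hv hP hm.1 hmP⟩

lemma exists_subset_finalClassesSet_of_mem_excessiveSupports (hconv : IsConvexMap f)
    (hmon : Monotone f) (hhom : AddHomog f) (hv : f v = v) {F : Set (Fin n)}
    (hF : F ∈ excessiveSupports f) : ∃ S ⊆ finalClassesSet (Subdiff f v), F = ⋃₀ S := by
  obtain ⟨m, hm, hmF, hmf⟩ := hF
  obtain ⟨P, hP, hmP⟩ := exists_mem_subdiff_vecMul_eq hconv hmon hhom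
    ((isExcessive_rightLineDerivPi_iff hconv hv hm.1).2 hmf)
  exact ⟨_, fun C hC => ⟨P, hP, hC.1⟩,
    (isStochMat_of_mem_subdiff hmon hhom hP).eq_sUnion_isFinalClass hm.1 hmP hmF⟩

end ExcessiveSupports

theorem stmt13_general (n : ℕ) (f : (Fin n → ℝ) → (Fin n → ℝ))
    (hconv : IsConvexMap f) (hmon : Monotone f) (hhom : AddHomog f)
    (v : Fin n → ℝ) (hv : f v = v) (F : Set (Fin n)) (hF : F.Nonempty) :
    -- (1) ↔ (2)
    ((∃ S : Set (Set (Fin n)), (∀ C ∈ S, C ∈ finalClassesSet (Subdiff f v)) ∧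
        F = ⋃₀ S) ↔
      (∃ m : Fin n → ℝ, IsStochVec m ∧ (∀ i, 0 < m i ↔ i ∈ F) ∧
        ∀ x, ∑ i, m i * x i ≤ ∑ i, m i * f x i)) ∧
    -- (2) ↔ (3)
    ((∃ m : Fin n → ℝ, IsStochVec m ∧ (∀ i, 0 < m i ↔ i ∈ F) ∧
        ∀ x, ∑ i, m i * x i ≤ ∑ i, m i * f x i) ↔
      (∃ D : (Fin n → ℝ) → (Fin n → ℝ),
        (∀ x i, Filter.Tendsto (fun ε : ℝ => (f (v + ε • x) i - f v i) / ε)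
          (nhdsWithin 0 (Set.Ioi 0)) (nhds (D x i))) ∧
        ∃ m : Fin n → ℝ, IsStochVec m ∧ (∀ i, 0 < m i ↔ i ∈ F) ∧
          ∀ x, ∑ i, m i * x i ≤ ∑ i, m i * D x i)) := by
  have hD : ∀ x i, Tendsto (fun ε : ℝ => (f (v + ε • x) i - f v i) / ε) (𝓝[>] 0)
      (𝓝 (rightLineDerivPi f v x i)) := fun x i => (hconv i).tendsto_rightSlope v x
  refine ⟨⟨?_, exists_subset_finalClassesSet_of_mem_excessiveSupports hconv hmon hhom hv⟩, ?_, ?_⟩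
  · rintro ⟨S, hS, rfl⟩
    exact sUnion_mem_excessiveSupports
      (fun C hC => finalClassesSet_subdiff_subset hmon hhom hv (hS C hC)) hF
  · rintro ⟨m, hm, hmF, hmf⟩
    exact ⟨_, hD, m, hm, hmF, (isExcessive_rightLineDerivPi_iff hconv hv hm.1).2 hmf⟩
  · rintro ⟨D, hD', m, hm, hmF, hmD⟩
    obtain rfl : D = rightLineDerivPi f v :=
      funext₂ fun x i => tendsto_nhds_unique (hD' x i) (hD x i)
    exact ⟨m, hm, hmF, (isExcessive_rightLineDerivPi_iff hconv hv hm.1).1 hmD⟩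

/-- characterization of unions of critical classes in terms of nonlinear
"excessive" stochastic measures, for `f` itself and for its directional derivative at
the fixed point `v`. -/
theorem stmt13 (n : ℕ) (hn : 1 ≤ n) (f : (Fin n → ℝ) → (Fin n → ℝ))
    (hconv : IsConvexMap f) (hmon : Monotone f) (hhom : AddHomog f)
    (v : Fin n → ℝ) (hv : f v = v) (F : Set (Fin n)) (hF : F.Nonempty) :
    -- (1) ↔ (2)
    ((∃ S : Set (Set (Fin n)), (∀ C ∈ S, C ∈ finalClassesSet (Subdiff f v)) ∧
        F = ⋃₀ S) ↔
      (∃ m : Fin n → ℝ, IsStochVec m ∧ (∀ i, 0 < m i ↔ i ∈ F) ∧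
        ∀ x, ∑ i, m i * x i ≤ ∑ i, m i * f x i)) ∧
    -- (2) ↔ (3)
    ((∃ m : Fin n → ℝ, IsStochVec m ∧ (∀ i, 0 < m i ↔ i ∈ F) ∧
        ∀ x, ∑ i, m i * x i ≤ ∑ i, m i * f x i) ↔
      (∃ D : (Fin n → ℝ) → (Fin n → ℝ),
        (∀ x i, Filter.Tendsto (fun ε : ℝ => (f (v + ε • x) i - f v i) / ε)
          (nhdsWithin 0 (Set.Ioi 0)) (nhds (D x i))) ∧
        ∃ m : Fin n → ℝ, IsStochVec m ∧ (∀ i, 0 < m i ↔ i ∈ F) ∧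
          ∀ x, ∑ i, m i * x i ≤ ∑ i, m i * D x i)) :=
  stmt13_general n f hconv hmon hhom v hv F hF
end

section
/- Let f : ℝ^n → ℝ^n be monotone and additively homogeneous. If f has a periodic orbit, i.e. there exist x ∈ ℝ^n and k ≥ 1 with f^k(x) = x, then f has a fixed point. -/
open Matrix Filter

/-!
Let `y` be the supremum of the periodic orbit of `x`. Monotonicity and periodicity give
`y ≤ f y`, so the iterates `f^[m] y` increase. A monotone additively homogeneous map is
nonexpansive for the sup-norm, so these iterates stay within `dist y x` of the finite orbit of
`x` and are bounded above. Their limit is a fixed point of the continuous map `f`.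
-/

open Function Set Bornology

variable {α : Type*}

theorem Function.IsPeriodicPt.finite_range_iterate {f : α → α} {x : α} {k : ℕ} (hk : 0 < k)
    (hx : IsPeriodicPt f k x) : (range fun m => f^[m] x).Finite := by
  refine ((finite_Iio k).image fun m => f^[m] x).subset ?_
  rintro _ ⟨m, rfl⟩
  exact ⟨m % k, Nat.mod_lt m hk, hx.iterate_mod_apply m⟩

theorem Monotone.exists_le_map_of_isPeriodicPt [SemilatticeSup α] {f : α → α} (hf : Monotone f)
    {x : α} {k : ℕ} (hk : 0 < k) (hx : IsPeriodicPt f k x) : ∃ y, y ≤ f y := by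
  have hne : (Finset.range k).Nonempty := ⟨0, Finset.mem_range.mpr hk⟩
  refine ⟨(Finset.range k).sup' hne (fun j => f^[j] x), Finset.sup'_le _ _ fun j _ => ?_⟩
  have hpred : f^[j] x = f (f^[(j + k - 1) % k] x) := by
    rw [hx.iterate_mod_apply, ← iterate_succ_apply' f, show (j + k - 1).succ = j + k by omega,
      iterate_add_apply, hx.eq]
  rw [hpred]
  exact hf (Finset.le_sup' (fun j => f^[j] x) (Finset.mem_range.mpr (Nat.mod_lt _ hk)))

theorem LipschitzWith.isBounded_range_iterate [PseudoMetricSpace α] {f : α → α}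
    (hf : LipschitzWith 1 f) {x : α} (hx : IsBounded (range fun m => f^[m] x)) (y : α) :
    IsBounded (range fun m => f^[m] y) := by
  obtain ⟨r, hr⟩ := hx.subset_closedBall x
  refine (Metric.isBounded_closedBall (x := x) (r := dist y x + r)).subset ?_
  rintro _ ⟨m, rfl⟩
  have hdist : dist (f^[m] y) (f^[m] x) ≤ dist y x := by
    simpa using (hf.iterate m).dist_le_mul y x
  have hx' : dist (f^[m] x) x ≤ r := hr ⟨m, rfl⟩
  exact (dist_triangle _ _ _).trans (add_le_add hdist hx')

theorem Monotone.exists_isFixedPt_of_le_map [ConditionallyCompletePartialOrderSup α]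
    [TopologicalSpace α] [SupConvergenceClass α] [T2Space α] {f : α → α} (hf : Monotone f)
    (hcont : Continuous f) {y : α} (hy : y ≤ f y) (hbdd : BddAbove (range fun m => f^[m] y)) :
    ∃ v, IsFixedPt f v :=
  ⟨_, isFixedPt_of_tendsto_iterate
    (tendsto_atTop_ciSup (hf.monotone_iterate_of_le_map hy) hbdd) hcont.continuousAt⟩

theorem le_dist_add {ι : Type*} [Fintype ι] (a b : ι → ℝ) : a ≤ fun i => dist a b + b i :=
  fun i =>
    calc a i ≤ b i + dist (a i) (b i) := by rw [Real.dist_eq]; linarith [le_abs_self (a i - b i)]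
      _ ≤ dist a b + b i := by linarith [dist_le_pi_dist a b i]

theorem Monotone.lipschitzWith_one_of_addHomog {n : ℕ} {f : (Fin n → ℝ) → (Fin n → ℝ)}
    (hmon : Monotone f) (hhom : AddHomog f) : LipschitzWith 1 f := by
  have hle : ∀ a b i, f a i ≤ dist a b + f b i := fun a b i => by
    simpa only [hhom (dist a b) b] using hmon (le_dist_add a b) i
  refine LipschitzWith.of_dist_le_mul fun a b => ?_
  rw [NNReal.coe_one, one_mul, dist_pi_le_iff dist_nonneg]
  intro i
  rw [Real.dist_eq, abs_sub_le_iff]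
  constructor
  · linarith [hle a b i]
  · linarith [hle b a i, dist_comm a b]

theorem stmt15_general (n : ℕ) (f : (Fin n → ℝ) → (Fin n → ℝ))
    (hmon : Monotone f) (hhom : AddHomog f)
    (x : Fin n → ℝ) (k : ℕ) (hk : 1 ≤ k) (hx : f^[k] x = x) :
    ∃ v, f v = v := by
  have hper : IsPeriodicPt f k x := hx
  have hlip := hmon.lipschitzWith_one_of_addHomog hhom
  obtain ⟨y, hy⟩ := hmon.exists_le_map_of_isPeriodicPt hk hper
  have hbdd : BddAbove (range fun m => f^[m] y) :=
    (hlip.isBounded_range_iterate (hper.finite_range_iterate hk).isBounded y).bddAbove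
  exact hmon.exists_isFixedPt_of_le_map hlip.continuous hy hbdd

/-- a monotone additively homogeneous map with a periodic orbit has a
fixed point. -/
theorem stmt15 (n : ℕ) (hn : 1 ≤ n) (f : (Fin n → ℝ) → (Fin n → ℝ))
    (hmon : Monotone f) (hhom : AddHomog f)
    (x : Fin n → ℝ) (k : ℕ) (hk : 1 ≤ k) (hx : f^[k] x = x) :
    ∃ v, f v = v :=
  stmt15_general n f hmon hhom x k hk hx
end

section
/- Let P be an n×n stochastic matrix and let x ∈ ℝ^n satisfy P^k x = x for some k ≥ 1. Then P^{c(P)} x = x, where c(P) is the cyclicity of the final graph of P; that is, the length of any periodic orbit of the map x ↦ Px divides c(P). -/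
open Matrix Filter

/-!
Let `c` be the cyclicity of the final graph and `z = x - P^c x`. As `z` is `P^k`-invariant and
`P^k` is stochastic, the maximum of `z`, attained at some node `i₀`, propagates to every node reached
from `i₀` by a walk whose length is a multiple of `k`. Such a walk leads into a final class, to a node
`j`. The return times at `j` contain all large multiples of their gcd, which divides `c`; padding with
closed walks at `j` shows that every walk of length a multiple of `c` from `j` ends where `z` is
maximal. Hence `(P^(c t) z) j = max z` for all `t`, and summing over `t < k` telescopes to
`k * max z = (x - P^(c k) x) j = 0`. So `z ≤ 0`; applying this to `-x` gives `P^c x = x`.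
-/

theorem SetGcd_eq_setGcd (S : Set ℕ) : SetGcd S = Nat.setGcd S := by
  have : {d | (∀ s ∈ S, d ∣ s) ∧ ∀ e, (∀ s ∈ S, e ∣ s) → e ∣ d} = {Nat.setGcd S} := by
    ext d
    simp only [Set.mem_ofPred_eq, Set.mem_singleton_iff, ← Nat.dvd_setGcd_iff]
    refine ⟨fun ⟨hd, h⟩ => Nat.dvd_antisymm hd (h _ dvd_rfl), ?_⟩
    rintro rfl
    exact ⟨dvd_rfl, fun _ => id⟩
  rw [SetGcd, this, csInf_singleton]

theorem SetLcm_eq_finset_lcm {S : Set ℕ} (hS : S.Finite) : SetLcm S = hS.toFinset.lcm id := by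
  have : {m | (∀ s ∈ S, s ∣ m) ∧ ∀ e, (∀ s ∈ S, s ∣ e) → m ∣ e} = {hS.toFinset.lcm id} := by
    ext m
    simp only [Set.mem_ofPred_eq, Set.mem_singleton_iff, ← hS.mem_toFinset, ← Finset.lcm_dvd_iff]
    refine ⟨fun ⟨hm, h⟩ => Nat.dvd_antisymm (h _ dvd_rfl) hm, ?_⟩
    rintro rfl
    exact ⟨dvd_rfl, fun _ => id⟩
  rw [SetLcm, this, csInf_singleton]

theorem dvd_SetLcm_of_mem {S : Set ℕ} (hS : S.Finite) {s : ℕ} (hs : s ∈ S) : s ∣ SetLcm S := by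
  rw [SetLcm_eq_finset_lcm hS]
  exact Finset.dvd_lcm (hS.mem_toFinset.mpr hs)

section Walks

variable {n : ℕ} {G H : Fin n → Fin n → Prop} {i j l : Fin n} {a b N : ℕ}

theorem graphPow_zero_iff : GraphPow G 0 i j ↔ i = j :=
  ⟨fun ⟨_, h0, h1, _⟩ => h0.symm.trans h1, fun h => ⟨fun _ => i, rfl, h, by simp⟩⟩

theorem graphPow_succ_iff : GraphPow G (N + 1) i j ↔ ∃ v, GraphPow G N i v ∧ G v j := by
  constructor
  · rintro ⟨c, h0, hN, hc⟩
    exact ⟨c N, ⟨c, h0, rfl, fun t ht => hc t (by omega)⟩, hN ▸ hc N (by omega)⟩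
  · rintro ⟨v, ⟨c, h0, hN, hc⟩, hvj⟩
    refine ⟨fun t => if t ≤ N then c t else j, by simp [h0], by simp, fun t ht => ?_⟩
    rcases Nat.lt_or_eq_of_le (Nat.lt_succ_iff.mp ht) with ht | rfl
    · simpa [ht.le, Nat.succ_le_of_lt ht] using hc t ht
    · simpa [hN] using hvj

theorem GraphPow.add (h₁ : GraphPow G a i j) (h₂ : GraphPow G b j l) :
    GraphPow G (a + b) i l := by
  induction b generalizing l with
  | zero => exact graphPow_zero_iff.mp h₂ ▸ h₁
  | succ b ih =>
    obtain ⟨v, hjv, hvl⟩ := graphPow_succ_iff.mp h₂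
    exact graphPow_succ_iff.mpr ⟨v, ih hjv, hvl⟩

theorem GraphPow.mono (hGH : ∀ i j, G i j → H i j) (h : GraphPow G N i j) : GraphPow H N i j :=
  let ⟨c, h0, hN, hc⟩ := h
  ⟨c, h0, hN, fun t ht => hGH _ _ (hc t ht)⟩

theorem reflTransGen_iff_exists_graphPow :
    Relation.ReflTransGen G i j ↔ ∃ N, GraphPow G N i j := by
  constructor
  · intro h
    induction h with
    | refl => exact ⟨0, graphPow_zero_iff.mpr rfl⟩
    | tail _ hvj ih =>
      obtain ⟨N, hN⟩ := ih
      exact ⟨N + 1, graphPow_succ_iff.mpr ⟨_, hN, hvj⟩⟩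
  · rintro ⟨N, h⟩
    induction N generalizing j with
    | zero => exact (graphPow_zero_iff.mp h) ▸ .refl
    | succ N ih =>
      obtain ⟨v, hiv, hvj⟩ := graphPow_succ_iff.mp h
      exact (ih hiv).tail hvj

end Walks

section NonnegMatrix

variable {n : ℕ} {R : Type*} [Semiring R] [PartialOrder R] [IsOrderedRing R] [NoZeroDivisors R]
  [Nontrivial R]

theorem pow_apply_ne_zero_iff_graphPow {P : Matrix (Fin n) (Fin n) R} (hP : ∀ i j, 0 ≤ P i j)
    (N : ℕ) (i j : Fin n) : (P ^ N) i j ≠ 0 ↔ GraphPow (fun a b => P a b ≠ 0) N i j := by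
  induction N generalizing j with
  | zero =>
    rw [pow_zero, graphPow_zero_iff]
    by_cases h : i = j <;> simp [one_apply, h]
  | succ N ih =>
    rw [pow_succ, mul_apply, graphPow_succ_iff, Ne, Finset.sum_eq_zero_iff_of_nonneg
      fun v _ => mul_nonneg (pow_apply_nonneg hP N i v) (hP v j)]
    simp [← ih, not_or]

end NonnegMatrix

theorem mulVec_apply_eq_iff_of_le {ι R : Type*} [Fintype ι] [DecidableEq ι] [CommRing R]
    [LinearOrder R] [IsStrictOrderedRing R] {Q : Matrix ι ι R} (hQ : Q ∈ rowStochastic R ι)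
    {z : ι → R} {M : R} (hz : ∀ j, z j ≤ M) (i : ι) :
    (Q *ᵥ z) i = M ↔ ∀ j, Q i j ≠ 0 → z j = M := by
  have hsum : (Q *ᵥ z) i - M = ∑ j, Q i j * (z j - M) := by
    simp [mulVec, dotProduct, mul_sub, Finset.sum_sub_distrib, ← Finset.sum_mul,
      sum_row_of_mem_rowStochastic hQ i]
  rw [← sub_eq_zero, hsum, Finset.sum_eq_zero_iff_of_nonpos fun j _ =>
    mul_nonpos_of_nonneg_of_nonpos (nonneg_of_mem_rowStochastic hQ) (sub_nonpos.mpr (hz j))]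
  simp [sub_eq_zero, or_iff_not_imp_left]

theorem pow_mulVec_eq_self {ι R : Type*} [Fintype ι] [DecidableEq ι] [CommSemiring R]
    {A : Matrix ι ι R} {v : ι → R} (h : A *ᵥ v = v) (m : ℕ) : (A ^ m) *ᵥ v = v := by
  induction m with
  | zero => exact one_mulVec v
  | succ m ih => rw [pow_succ, ← mulVec_mulVec, h, ih]

section Stochastic

variable {n : ℕ} {P : Matrix (Fin n) (Fin n) ℝ} {C F : Set (Fin n)} {i j : Fin n}

theorem isStochMat_iff_mem_rowStochastic : IsStochMat P ↔ P ∈ rowStochastic ℝ (Fin n) := by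
  simp [IsStochMat, IsStochVec, mem_rowStochastic_iff_sum, forall_and]

theorem IsStochVec.exists_ne_zero {p : Fin n → ℝ} (hp : IsStochVec p) : ∃ j, p j ≠ 0 :=
  (Finset.exists_ne_zero_of_sum_ne_zero (hp.2 ▸ one_ne_zero)).imp fun _ h => h.2

theorem IsStochMat.exists_graphPow (hP : IsStochMat P) (N : ℕ) (i : Fin n) :
    ∃ j, GraphPow (fun a b => P a b ≠ 0) N i j := by
  induction N with
  | zero => exact ⟨i, graphPow_zero_iff.mpr rfl⟩
  | succ N ih =>
    obtain ⟨v, hv⟩ := ih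
    obtain ⟨j, hj⟩ := (hP v).exists_ne_zero
    exact ⟨j, graphPow_succ_iff.mpr ⟨v, hv, hj⟩⟩

theorem IsClass.matAccess (hC : IsClass P C) (hi : i ∈ C) (hj : j ∈ C) : MatAccess P i j := by
  obtain ⟨_, rfl⟩ := hC
  exact hi.2.trans hj.1

theorem IsClass.eq_setOf_of_mem (hC : IsClass P C) (hi : i ∈ C) :
    C = {j | MatAccess P i j ∧ MatAccess P j i} := by
  ext j
  refine ⟨fun hj => ⟨hC.matAccess hi hj, hC.matAccess hj hi⟩, fun ⟨hij, hji⟩ => ?_⟩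
  obtain ⟨_, rfl⟩ := hC
  exact ⟨hi.1.trans hij, hji.trans hi.2⟩

theorem exists_isFinalClass_matAccess (P : Matrix (Fin n) (Fin n) ℝ) (i : Fin n) :
    ∃ F j, IsFinalClass P F ∧ j ∈ F ∧ MatAccess P i j := by
  classical
  let reach : Fin n → Finset (Fin n) := fun v => Finset.univ.filter (MatAccess P v)
  have mem_reach {v w} : w ∈ reach v ↔ MatAccess P v w := by simp [reach]
  -- a node of minimal reach set can only access nodes that access it back
  obtain ⟨j, hj, hmin⟩ := Finset.exists_min_image (reach i) (fun v => (reach v).card)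
    ⟨i, mem_reach.mpr .refl⟩
  have hij : MatAccess P i j := mem_reach.mp hj
  have hback : ∀ v, MatAccess P j v → MatAccess P v j := fun v hjv => by
    have hsub : reach v ⊆ reach j := fun w hw => mem_reach.mpr (hjv.trans (mem_reach.mp hw))
    rw [← mem_reach, Finset.eq_of_subset_of_card_le hsub (hmin v (mem_reach.mpr (hij.trans hjv)))]
    exact mem_reach.mpr .refl
  refine ⟨{v | MatAccess P j v ∧ MatAccess P v j}, j, ⟨⟨j, rfl⟩, ?_⟩, ⟨.refl, .refl⟩, hij⟩
  rintro u ⟨hju, -⟩ w huw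
  exact ⟨hju.trans huw, hback w (hju.trans huw)⟩

theorem IsFinalClass.gAccess_finalGraph_iff (hF : IsFinalClass P F) (hi : i ∈ F) :
    GAccess (finalGraph P) i j ↔ MatAccess P i j := by
  refine ⟨Relation.ReflTransGen.mono (fun _ _ ⟨_, _, _, _, h⟩ => h) _ _, fun h => ?_⟩
  induction h with
  | refl => exact .refl
  | tail hiv hvj ih =>
    have hv := hF.2 i hi _ hiv
    exact ih.tail ⟨F, hF, hv, hF.2 _ hv _ (.single hvj), hvj⟩

theorem IsFinalClass.isGraphClass (hP : IsStochMat P) (hF : IsFinalClass P F) (hi : i ∈ F) :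
    IsGraphClass (finalGraph P) F := by
  obtain ⟨j, hij⟩ := (hP i).exists_ne_zero
  have hj : j ∈ F := hF.2 i hi j (.single hij)
  refine ⟨⟨i, ?_⟩, i, hi, j, hj, F, hF, hi, hj, hij⟩
  rw [hF.1.eq_setOf_of_mem hi]
  ext j
  simp only [Set.mem_ofPred_eq, hF.gAccess_finalGraph_iff hi]
  exact and_congr_right fun hij => (hF.gAccess_finalGraph_iff (hF.2 i hi j hij)).symm

end Stochastic

section ReturnTimes

variable {n : ℕ} {G : Fin n → Fin n → Prop} {i j l : Fin n} {a b d k N : ℕ}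

def returnTimes (G : Fin n → Fin n → Prop) (i : Fin n) : AddSubmonoid ℕ where
  carrier := {N | GraphPow G N i i}
  add_mem' := GraphPow.add
  zero_mem' := graphPow_zero_iff.mpr rfl

theorem setGcd_returnTimes_dvd (hij : GraphPow G a i j) (hji : GraphPow G b j i)
    (hj : GraphPow G N j j) : Nat.setGcd (returnTimes G i) ∣ N := by
  have h₁ : a + b ∈ returnTimes G i := hij.add hji
  have h₂ : a + b + N ∈ returnTimes G i := add_right_comm a N b ▸ (hij.add hj).add hji
  exact (Nat.dvd_add_right (Nat.setGcd_dvd_of_mem h₁)).mp (Nat.setGcd_dvd_of_mem h₂)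

theorem exists_graphPow_mul_of_setGcd_returnTimes_dvd (hk : 0 < k)
    (hd : Nat.setGcd (returnTimes G j) ∣ d) (hij : GraphPow G (k * a) i j)
    (hjl : GraphPow G d j l) : ∃ m, GraphPow G (k * m) i l := by
  obtain ⟨N, hN⟩ := Nat.exists_mem_closure_of_ge (returnTimes G j : Set ℕ)
  rw [AddSubmonoid.closure_eq] at hN
  obtain ⟨k', rfl⟩ := Nat.exists_eq_add_one_of_ne_zero hk.ne'
  rcases Nat.eq_zero_or_pos d with rfl | hd₀
  · exact ⟨a, graphPow_zero_iff.mp hjl ▸ hij⟩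
  -- pad with a closed walk at `j` whose length makes the total a multiple of `k' + 1`
  have hL : GraphPow G (d * ((k' + 1) * N + k')) j j :=
    hN _ (le_trans (by nlinarith) (Nat.le_mul_of_pos_left _ hd₀)) (hd.mul_right _)
  refine ⟨a + d * (N + 1), ?_⟩
  convert (hij.add hL).add hjl using 1
  ring

end ReturnTimes

theorem dvd_graphCyclicity {n : ℕ} {G : Fin n → Fin n → Prop} {C : Set (Fin n)}
    (hC : IsGraphClass G C) : SetGcd {ℓ | HasCircuitIn G C ℓ} ∣ GraphCyclicity G := by
  refine dvd_SetLcm_of_mem ((Set.finite_range fun C => SetGcd {ℓ | HasCircuitIn G C ℓ}).subset ?_)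
    ⟨C, hC, rfl⟩
  rintro _ ⟨C, -, rfl⟩
  exact ⟨C, rfl⟩

section Cyclicity

variable {n : ℕ} {P : Matrix (Fin n) (Fin n) ℝ} {F : Set (Fin n)} {j : Fin n} {k : ℕ}

theorem IsFinalClass.setGcd_returnTimes_dvd_graphCyclicity (hP : IsStochMat P)
    (hF : IsFinalClass P F) (hj : j ∈ F) :
    Nat.setGcd (returnTimes (fun a b => P a b ≠ 0) j) ∣ GraphCyclicity (finalGraph P) := by
  refine dvd_trans ?_ (dvd_graphCyclicity (hF.isGraphClass hP hj))
  rw [SetGcd_eq_setGcd, Nat.dvd_setGcd_iff]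
  rintro ℓ ⟨-, c, hc, hcF, hcG⟩
  have hv : c 0 ∈ F := hcF 0 (Nat.zero_le _)
  obtain ⟨a, ha⟩ := reflTransGen_iff_exists_graphPow.mp (hF.1.matAccess hj hv)
  obtain ⟨b, hb⟩ := reflTransGen_iff_exists_graphPow.mp (hF.1.matAccess hv hj)
  exact setGcd_returnTimes_dvd ha hb
    (GraphPow.mono (fun _ _ ⟨_, _, _, _, h⟩ => h) ⟨c, rfl, hc.symm, hcG⟩)

theorem IsStochMat.exists_forall_graphPow_mul_graphCyclicity (hP : IsStochMat P) (hk : 0 < k)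
    (i : Fin n) : ∃ j, ∀ ℓ l,
      GraphPow (fun a b => P a b ≠ 0) (ℓ * GraphCyclicity (finalGraph P)) j l →
      ∃ m, GraphPow (fun a b => P a b ≠ 0) (k * m) i l := by
  obtain ⟨F, f, hF, hf, hif⟩ := exists_isFinalClass_matAccess P i
  obtain ⟨a, ha⟩ := reflTransGen_iff_exists_graphPow.mp hif
  obtain ⟨k', rfl⟩ := Nat.exists_eq_add_one_of_ne_zero hk.ne'
  obtain ⟨j, hj⟩ := hP.exists_graphPow (k' * a) f
  have hjF : j ∈ F := hF.2 f hf j (reflTransGen_iff_exists_graphPow.mpr ⟨_, hj⟩)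
  have hij : GraphPow (fun a b => P a b ≠ 0) ((k' + 1) * a) i j := by
    convert ha.add hj using 1
    ring
  exact ⟨j, fun ℓ l hjl => exists_graphPow_mul_of_setGcd_returnTimes_dvd hk
    ((hF.setGcd_returnTimes_dvd_graphCyclicity hP hjF).mul_left ℓ) hij hjl⟩

theorem IsStochMat.apply_le_pow_graphCyclicity_mulVec (hP : IsStochMat P) (hk : 0 < k)
    {y : Fin n → ℝ} (hy : (P ^ k) *ᵥ y = y) (i : Fin n) :
    y i ≤ (P ^ GraphCyclicity (finalGraph P) *ᵥ y) i := by
  set c := GraphCyclicity (finalGraph P)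
  set z := y - (P ^ c) *ᵥ y
  have hstoch (N : ℕ) : P ^ N ∈ rowStochastic ℝ (Fin n) :=
    pow_mem (isStochMat_iff_mem_rowStochastic.mp hP) N
  have hsupp := pow_apply_ne_zero_iff_graphPow fun i j => (hP i).1 j
  have hzk (m : ℕ) : (P ^ (k * m)) *ᵥ z = z := by
    have hyk : (P ^ (k * m)) *ᵥ y = y := by rw [pow_mul]; exact pow_mulVec_eq_self hy m
    simp only [z, mulVec_sub, mulVec_mulVec, ← pow_add, add_comm (k * m) c]
    rw [pow_add, ← mulVec_mulVec, hyk]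
  have : Nonempty (Fin n) := ⟨i⟩
  obtain ⟨i₀, hi₀⟩ := Finite.exists_max z
  have hzmax (m : ℕ) (j : Fin n) (h : GraphPow _ (k * m) i₀ j) : z j = z i₀ :=
    (mulVec_apply_eq_iff_of_le (hstoch _) hi₀ i₀).mp (by rw [hzk]) j ((hsupp _ _ _).mpr h)
  obtain ⟨j₀, hj₀⟩ := hP.exists_forall_graphPow_mul_graphCyclicity hk i₀
  have hzj₀ (t : ℕ) : ((P ^ c) ^ t *ᵥ z) j₀ = z i₀ := by
    rw [← pow_mul, mul_comm]
    refine (mulVec_apply_eq_iff_of_le (hstoch _) hi₀ j₀).mpr fun j h => ?_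
    obtain ⟨m, hm⟩ := hj₀ t j ((hsupp _ _ _).mp h)
    exact hzmax m j hm
  have htel : ∑ t ∈ Finset.range k, (P ^ c) ^ t *ᵥ z = 0 := by
    simp only [z, mulVec_sub, mulVec_mulVec, ← pow_succ]
    rw [Finset.sum_range_sub' (fun t => (P ^ c) ^ t *ᵥ y), pow_zero, one_mulVec, ← pow_mul,
      mul_comm c k, pow_mul, pow_mulVec_eq_self hy, sub_self]
  have hmax_zero : (k : ℝ) * z i₀ = 0 := by
    simpa [Finset.sum_apply, hzj₀] using congrFun htel j₀
  have : z i ≤ 0 := (hi₀ i).trans_eq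
    ((mul_eq_zero.mp hmax_zero).resolve_left (Nat.cast_ne_zero.mpr hk.ne'))
  simpa [z, sub_nonpos] using this

end Cyclicity

theorem stmt16_general (n : ℕ) (P : Matrix (Fin n) (Fin n) ℝ)
    (hP : IsStochMat P) (x : Fin n → ℝ) (k : ℕ) (hk : 1 ≤ k)
    (hx : (P ^ k).mulVec x = x) :
    (P ^ GraphCyclicity (finalGraph P)).mulVec x = x := by
  funext i
  refine le_antisymm ?_ (hP.apply_le_pow_graphCyclicity_mulVec hk hx i)
  simpa [mulVec_neg] using
    hP.apply_le_pow_graphCyclicity_mulVec hk (y := -x) (by rw [mulVec_neg, hx]) i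

/-- the length of any periodic orbit of a stochastic matrix `P` divides
the cyclicity of its final graph. -/
theorem stmt16 (n : ℕ) (hn : 1 ≤ n) (P : Matrix (Fin n) (Fin n) ℝ)
    (hP : IsStochMat P) (x : Fin n → ℝ) (k : ℕ) (hk : 1 ≤ k)
    (hx : (P ^ k).mulVec x = x) :
    (P ^ GraphCyclicity (finalGraph P)).mulVec x = x :=
  stmt16_general n P hP x k hk hx
end
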